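/- arXiv:2204.04699 — 9 statements merged into one kernel-verified Lean document; each statement's English description precedes it below -/
import Mathlib

section
/- Let W be a finite-dimensional vector space over a field K equipped with a nondegenerate alternating bilinear form B, and let σ be an isotropic subspace of W (σ ⊆ σ^#, where ^# denotes B-orthogonal complement). Then for every subspace β of W: (σ + (σ^# ∩ β))^# = σ + (σ^# ∩ β^#). In particular, if β is isotropic (resp. Lagrangian, i.e. β = β^#), then so is σ + (σ^# ∩ β). -/
open LinearMap.BilinForm

lemma orth_sup {K W : Type*} [Field K] [AddCommGroup W] [Module K W]
    (B : LinearMap.BilinForm K W) (A C : Submodule K W) :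
    B.orthogonal (A ⊔ C) = B.orthogonal A ⊓ B.orthogonal C := by
  ext x
  simp only [Submodule.mem_inf, mem_orthogonal_iff]
  constructor
  · intro h
    exact ⟨fun n hn => h n (le_sup_left (a := A) (b := C) hn),
           fun n hn => h n (le_sup_right (a := A) (b := C) hn)⟩
  · rintro ⟨h1, h2⟩ n hn
    obtain ⟨y, hy, z, hz, rfl⟩ := Submodule.mem_sup.mp hn
    have := h1 _ hy
    have := h2 _ hz
    simp_all [LinearMap.BilinForm.IsOrtho]

/-- For a nondegenerate alternating bilinear form `B` on a
finite-dimensional space `W` and an isotropic subspace `σ`, for every subspace `β`: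
`(σ + (σ^# ∩ β))^# = σ + (σ^# ∩ β^#)`; in particular `σ + (σ^# ∩ β)` is isotropic
(resp. Lagrangian) whenever `β` is. -/
theorem orthogonal_sup_inf_orthogonal {K W : Type*} [Field K] [AddCommGroup W] [Module K W]
    [FiniteDimensional K W] (B : LinearMap.BilinForm K W)
    (hB : B.Nondegenerate) (halt : B.IsAlt)
    (σ : Submodule K W) (hσ : σ ≤ B.orthogonal σ) :
    (∀ β : Submodule K W,
        B.orthogonal (σ ⊔ (B.orthogonal σ ⊓ β)) = σ ⊔ (B.orthogonal σ ⊓ B.orthogonal β)) ∧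
      (∀ β : Submodule K W, β ≤ B.orthogonal β →
        σ ⊔ (B.orthogonal σ ⊓ β) ≤ B.orthogonal (σ ⊔ (B.orthogonal σ ⊓ β))) ∧
      ∀ β : Submodule K W, β = B.orthogonal β →
        σ ⊔ (B.orthogonal σ ⊓ β) = B.orthogonal (σ ⊔ (B.orthogonal σ ⊓ β)) := by
  have hrefl := halt.isRefl
  have key : ∀ β : Submodule K W,
      B.orthogonal (σ ⊔ (B.orthogonal σ ⊓ β)) = σ ⊔ (B.orthogonal σ ⊓ B.orthogonal β) := by
    intro β
    have hinf : B.orthogonal (B.orthogonal σ ⊓ β) = σ ⊔ B.orthogonal β := by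
      have : B.orthogonal σ ⊓ β
          = B.orthogonal (B.orthogonal (B.orthogonal σ ⊓ β)) :=
        (orthogonal_orthogonal hB hrefl _).symm
      have h2 : B.orthogonal (σ ⊔ B.orthogonal β)
          = B.orthogonal σ ⊓ β := by
        rw [orth_sup, orthogonal_orthogonal hB hrefl]
      calc B.orthogonal (B.orthogonal σ ⊓ β)
          = B.orthogonal (B.orthogonal (σ ⊔ B.orthogonal β)) := by rw [h2]
        _ = σ ⊔ B.orthogonal β := orthogonal_orthogonal hB hrefl _
    rw [orth_sup, hinf]
    -- modular law: σ^# ⊓ (σ ⊔ β^#) = σ ⊔ (σ^# ⊓ β^#) since σ ≤ σ^#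
    rw [inf_comm, sup_inf_assoc_of_le (B.orthogonal β) hσ, inf_comm]
  refine ⟨key, ?_, ?_⟩
  · intro β hβ
    rw [key β]
    exact sup_le_sup_left (inf_le_inf_left _ hβ) σ
  · intro β hβ
    rw [key β, ← hβ]
end

section
/- Let L₁ and L₂ be lattices, G a commutative group (written multiplicatively), and rᵢ : Lᵢ → G maps satisfying rᵢ(x ⊔ y)·rᵢ(x ⊓ y) = rᵢ(x)·rᵢ(y) for all x, y ∈ Lᵢ (i = 1,2). Let † : L₁ → L₂ be a bijection such that both † and its inverse are order-reversing, and suppose there is c ∈ G with r₁(x)·r₂(x†) = c for all x ∈ L₁. Then for all ξ, α ∈ L₁ and η ∈ L₂ (writing η† ∈ L₁ for the image of η under the inverse of †): (r₁(η† ⊓ α)·r₁(ξ ⊓ α)⁻¹)·(r₂(ξ† ⊓ α†)·r₂(η ⊓ α†)⁻¹) = r₁(η†)·r₁(ξ)⁻¹ = r₂(ξ†)·r₂(η)⁻¹. -/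
/-- The general rank identity for an anti-isomorphism between two
`G`-graded lattices. -/
theorem general_rank_identity_two_lattices {L₁ L₂ G : Type*} [Lattice L₁] [Lattice L₂]
    [CommGroup G] (r₁ : L₁ → G) (r₂ : L₂ → G)
    (hr₁ : ∀ x y : L₁, r₁ (x ⊔ y) * r₁ (x ⊓ y) = r₁ x * r₁ y)
    (hr₂ : ∀ x y : L₂, r₂ (x ⊔ y) * r₂ (x ⊓ y) = r₂ x * r₂ y)
    (e : L₁ ≃ L₂)
    (he : ∀ x y : L₁, x ≤ y → e y ≤ e x)
    (he' : ∀ x y : L₂, x ≤ y → e.symm y ≤ e.symm x)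
    (c : G) (hc : ∀ x : L₁, r₁ x * r₂ (e x) = c)
    (ξ α : L₁) (η : L₂) :
    (r₁ (e.symm η ⊓ α) * (r₁ (ξ ⊓ α))⁻¹) * (r₂ (e ξ ⊓ e α) * (r₂ (η ⊓ e α))⁻¹)
        = r₁ (e.symm η) * (r₁ ξ)⁻¹ ∧
      r₁ (e.symm η) * (r₁ ξ)⁻¹ = r₂ (e ξ) * (r₂ η)⁻¹ := by
  -- e maps meets to joins
  have hmeet : ∀ x y : L₁, e (x ⊓ y) = e x ⊔ e y := by
    intro x y
    apply le_antisymm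
    · have h1 : e.symm (e x ⊔ e y) ≤ x := by
        have := he' (e x) (e x ⊔ e y) le_sup_left
        simpa using this
      have h2 : e.symm (e x ⊔ e y) ≤ y := by
        have := he' (e y) (e x ⊔ e y) le_sup_right
        simpa using this
      have := he _ _ (le_inf h1 h2)
      simpa using this
    · exact sup_le (he _ _ inf_le_left) (he _ _ inf_le_right)
  -- convert r₁ to r₂
  have key : ∀ x : L₁, r₁ x = c * (r₂ (e x))⁻¹ := by
    intro x
    exact eq_mul_inv_of_mul_eq (hc x)
  have second : r₁ (e.symm η) * (r₁ ξ)⁻¹ = r₂ (e ξ) * (r₂ η)⁻¹ := by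
    rw [key, key]
    simp only [Equiv.apply_symm_apply]
    simp [mul_comm, mul_assoc, mul_left_comm]
  constructor
  · rw [key (e.symm η ⊓ α), key (ξ ⊓ α), hmeet, hmeet]
    simp only [Equiv.apply_symm_apply]
    rw [second]
    have h1 := hr₂ η (e α)
    have h2 := hr₂ (e ξ) (e α)
    have : r₂ (η ⊔ e α) = r₂ η * r₂ (e α) * (r₂ (η ⊓ e α))⁻¹ :=
      eq_mul_inv_of_mul_eq h1
    rw [this]
    have : r₂ (e ξ ⊔ e α) = r₂ (e ξ) * r₂ (e α) * (r₂ (e ξ ⊓ e α))⁻¹ :=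
      eq_mul_inv_of_mul_eq h2
    rw [this]
    simp [mul_comm, mul_assoc, mul_left_comm]
  · exact second
end

section
/- Let L be a lattice, G a commutative group (written multiplicatively), and r : L → G a map satisfying r(x ⊔ y)·r(x ⊓ y) = r(x)·r(y) for all x, y ∈ L. Let † : L → L be an order-reversing involution ((x†)† = x) such that r(x)·r(x†) = c is the same element of G for all x ∈ L. Then for all ξ, η, α ∈ L: (r(η† ⊓ α)·r(ξ ⊓ α)⁻¹)·(r(ξ† ⊓ α†)·r(η ⊓ α†)⁻¹) = r(η†)·r(ξ)⁻¹ = r(ξ†)·r(η)⁻¹. In particular, taking η = ξ: (r(ξ† ⊓ α)·r(ξ ⊓ α)⁻¹)·(r(ξ† ⊓ α†)·r(ξ ⊓ α†)⁻¹) = r(ξ†)·r(ξ)⁻¹. -/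
private lemma grk_key {G : Type*} [CommGroup G] (A B S T X Y R c : G)
    (h1 : T * A = X * R) (h2 : S * B = Y * R) :
    A * B⁻¹ * (c * S⁻¹ * (c * T⁻¹)⁻¹) = X * Y⁻¹ := by
  have : A * B⁻¹ * (c * S⁻¹ * (c * T⁻¹)⁻¹) = (T * A) * (S * B)⁻¹ := by
    simp [mul_inv, inv_inv, mul_comm, mul_assoc, mul_left_comm]
  rw [this, h1, h2]
  simp [mul_inv, mul_comm, mul_assoc, mul_left_comm]

/-- The general rank identity for a quasi-complementation on a
`G`-graded lattice, together with its special case `η = ξ`. -/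
theorem general_rank_identity_quasi_complementation {L G : Type*} [Lattice L] [CommGroup G]
    (r : L → G) (hr : ∀ x y : L, r (x ⊔ y) * r (x ⊓ y) = r x * r y)
    (dag : L → L) (hinv : ∀ x, dag (dag x) = x)
    (hanti : ∀ x y : L, x ≤ y → dag y ≤ dag x)
    (c : G) (hc : ∀ x, r x * r (dag x) = c)
    (ξ η α : L) :
    ((r (dag η ⊓ α) * (r (ξ ⊓ α))⁻¹) * (r (dag ξ ⊓ dag α) * (r (η ⊓ dag α))⁻¹)
          = r (dag η) * (r ξ)⁻¹ ∧
        r (dag η) * (r ξ)⁻¹ = r (dag ξ) * (r η)⁻¹) ∧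
      (r (dag ξ ⊓ α) * (r (ξ ⊓ α))⁻¹) * (r (dag ξ ⊓ dag α) * (r (ξ ⊓ dag α))⁻¹)
          = r (dag ξ) * (r ξ)⁻¹ := by
  have hdag : ∀ x y : L, dag (x ⊔ y) = dag x ⊓ dag y := by
    intro x y
    apply le_antisymm
    · exact le_inf (hanti _ _ le_sup_left) (hanti _ _ le_sup_right)
    · have h1 : x ⊔ y ≤ dag (dag x ⊓ dag y) := by
        apply sup_le
        · have := hanti _ _ (inf_le_left : dag x ⊓ dag y ≤ dag x)
          rwa [hinv] at this
        · have := hanti _ _ (inf_le_right : dag x ⊓ dag y ≤ dag y)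
          rwa [hinv] at this
      have := hanti _ _ h1
      rwa [hinv] at this
  have hdval : ∀ x : L, r (dag x) = c * (r x)⁻¹ := by
    intro x
    rw [← hc x, mul_comm (r x), mul_inv_cancel_right]
  have main : ∀ ξ η : L,
      (r (dag η ⊓ α) * (r (ξ ⊓ α))⁻¹) * (r (dag ξ ⊓ dag α) * (r (η ⊓ dag α))⁻¹)
        = r (dag η) * (r ξ)⁻¹ := by
    intro ξ η
    have h1 : r (dag ξ ⊓ dag α) = c * (r (ξ ⊔ α))⁻¹ := by
      rw [← hdag, hdval]
    have h2 : r (η ⊓ dag α) = c * (r (dag η ⊔ α))⁻¹ := by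
      have : dag (dag η ⊔ α) = η ⊓ dag α := by rw [hdag, hinv]
      rw [← this, hdval]
    rw [h1, h2]
    exact grk_key _ _ _ _ _ _ (r α) c (hr (dag η) α) (hr ξ α)
  refine ⟨⟨main ξ η, ?_⟩, main ξ ξ⟩
  rw [hdval η, hdval ξ]
  simp [mul_comm, mul_assoc, mul_left_comm]
end

section
/- Let V be a finite-dimensional vector space over a field K and let † be an order-reversing involution on the lattice of subspaces of V (i.e. (λ†)† = λ for all subspaces λ, and λ ⊆ μ implies μ† ⊆ λ†). Then for every subspace λ of V: dim λ + dim λ† = dim V. -/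
open Module

/-- A covering pair of submodules in a finite-dimensional space differs in dimension by one. -/
lemma finrank_of_covBy_aux {K V : Type*} [Field K] [AddCommGroup V]
    [Module K V] [FiniteDimensional K V]
    {A B : Submodule K V} (h : A ⋖ B) :
    finrank K B = finrank K A + 1 := by
  obtain ⟨x, hxB, hxA⟩ := SetLike.exists_of_lt h.lt
  have hcov : A ⋖ (K ∙ x) ⊔ A := Submodule.covBy_span_singleton_sup hxA
  have hle : (K ∙ x) ⊔ A ≤ B := sup_le ((Submodule.span_singleton_le_iff_mem _ _).2 hxB) h.lt.le
  have hB : (K ∙ x) ⊔ A = B := by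
    rcases lt_or_eq_of_le hle with hlt | he
    · exact (h.2 hcov.lt hlt).elim
    · exact he
  have h1 : finrank K ((K ∙ x) ⊔ A : Submodule K V) ≤ finrank K (K ∙ x) + finrank K A :=
    Submodule.finrank_add_le_finrank_add_finrank _ _
  have h2 : finrank K (K ∙ x) = 1 := finrank_span_singleton (by rintro rfl; exact hxA A.zero_mem)
  have h3 : finrank K A < finrank K B := Submodule.finrank_lt_finrank_of_lt h.lt
  rw [hB, h2] at h1
  omega

/-- For an order-reversing involution `†` on the lattice of subspaces of a
finite-dimensional vector space `V`, one has `dim λ + dim λ† = dim V` for every subspace `λ`. -/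
theorem finrank_add_finrank_quasi_complement {K V : Type*} [Field K] [AddCommGroup V]
    [Module K V] [FiniteDimensional K V]
    (dag : Submodule K V → Submodule K V)
    (hinv : ∀ W : Submodule K V, dag (dag W) = W)
    (hanti : ∀ W U : Submodule K V, W ≤ U → dag U ≤ dag W)
    (W : Submodule K V) :
    finrank K W + finrank K (dag W) = finrank K V := by
  have hstrict : ∀ {A B : Submodule K V}, A < B → dag B < dag A := by
    intro A B hAB
    refine lt_of_le_of_ne (hanti _ _ hAB.le) ?_
    intro he
    have := congrArg dag he
    rw [hinv, hinv] at this
    exact hAB.ne this.symm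
  have hcov : ∀ {A B : Submodule K V}, A ⋖ B → dag B ⋖ dag A := by
    intro A B h
    refine ⟨hstrict h.lt, ?_⟩
    intro X h1 h2
    have hA : A < dag X := by
      have := hstrict h2
      rwa [hinv] at this
    have hB : dag X < B := by
      have := hstrict h1
      rwa [hinv] at this
    exact h.2 hA hB
  have hdagtop : dag ⊤ = ⊥ := by
    rw [eq_bot_iff, ← hinv ⊥]
    exact hanti _ _ le_top
  -- strong induction on codimension of W
  have key : ∀ (m : ℕ) (W : Submodule K V), finrank K V - finrank K W = m →
      finrank K W + finrank K (dag W) = finrank K V := by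
    intro m
    induction m using Nat.strong_induction_on with
    | _ m ih =>
      intro W hm
      rcases eq_or_ne W ⊤ with rfl | hW
      · rw [hdagtop]
        simp
      · obtain ⟨x, hx⟩ := SetLike.exists_of_lt (lt_of_le_of_ne (le_top (a := W)) hW)
        set U : Submodule K V := (K ∙ x) ⊔ W with hU
        have hcovWU : W ⋖ U := Submodule.covBy_span_singleton_sup hx.2
        have hUr : finrank K U = finrank K W + 1 := finrank_of_covBy_aux hcovWU
        have hdagr : finrank K (dag W) = finrank K (dag U) + 1 :=
          finrank_of_covBy_aux (hcov hcovWU)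
        have hUle : finrank K U ≤ finrank K V := Submodule.finrank_le U
        have hIH := ih (finrank K V - finrank K U) (by omega) U rfl
        omega
  exact key _ W rfl
end

section
/- Let V be a finite-dimensional vector space over a field K and let † be an order-reversing involution on the lattice of subspaces of V. Then for all subspaces α, β of V: (i) dim α − dim(α ∩ β) = dim β† − dim(β† ∩ α†), and (ii) dim(α ∩ β) + dim β† = dim(α† ∩ β†) + dim α. -/
open Module

private lemma covBy_finrank' {K V : Type*} [Field K] [AddCommGroup V]
    [Module K V] [FiniteDimensional K V] {W U : Submodule K V} (h : W ⋖ U) :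
    finrank K U = finrank K W + 1 := by
  obtain ⟨x, hxU, hxW⟩ := SetLike.exists_of_lt h.lt
  have hx0 : x ≠ 0 := fun hx => hxW (hx ▸ W.zero_mem)
  have hlt : W < (K ∙ x) ⊔ W := (Submodule.covBy_span_singleton_sup hxW).lt
  have hle : (K ∙ x) ⊔ W ≤ U := sup_le ((Submodule.span_singleton_le_iff_mem x U).2 hxU) h.le
  have hU : (K ∙ x) ⊔ W = U := by
    rcases hle.lt_or_eq with h' | h'
    · exact absurd h' (h.2 hlt)
    · exact h'
  have hinf : (K ∙ x) ⊓ W = ⊥ := by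
    rw [eq_bot_iff]
    intro y ⟨hy1, hy2⟩
    obtain ⟨c, rfl⟩ := Submodule.mem_span_singleton.1 hy1
    rcases eq_or_ne c 0 with rfl | hc
    · simp
    · exact absurd (by simpa [hc] using W.smul_mem c⁻¹ hy2) hxW
  have := Submodule.finrank_sup_add_finrank_inf_eq (K ∙ x) W
  rw [hU, hinf, finrank_span_singleton hx0] at this
  simp only [finrank_bot, add_zero] at this
  omega

/-- For an order-reversing involution `†` on the lattice of subspaces of a
finite-dimensional vector space `V` and subspaces `α, β`:
(i) `dim α − dim(α ∩ β) = dim β† − dim(β† ∩ α†)`, and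
(ii) `dim(α ∩ β) + dim β† = dim(α† ∩ β†) + dim α`. -/
theorem rho_eq_rho_dag {K V : Type*} [Field K] [AddCommGroup V]
    [Module K V] [FiniteDimensional K V]
    (dag : Submodule K V → Submodule K V)
    (hinv : ∀ W : Submodule K V, dag (dag W) = W)
    (hanti : ∀ W U : Submodule K V, W ≤ U → dag U ≤ dag W)
    (α β : Submodule K V) :
    ((finrank K α : ℤ) - finrank K (α ⊓ β : Submodule K V)
        = (finrank K (dag β) : ℤ) - finrank K (dag β ⊓ dag α : Submodule K V)) ∧
      finrank K (α ⊓ β : Submodule K V) + finrank K (dag β)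
        = finrank K (dag α ⊓ dag β : Submodule K V) + finrank K α := by
  have hinj : Function.Injective dag := fun a b h => by
    rw [← hinv a, h, hinv]
  have hlt : ∀ W U : Submodule K V, W < U → dag U < dag W := fun W U h =>
    lt_of_le_of_ne (hanti _ _ h.le) (fun he => h.ne (hinj he).symm)
  -- dag reverses covers
  have hcov : ∀ W U : Submodule K V, W ⋖ U → dag U ⋖ dag W := by
    intro W U h
    refine ⟨hlt _ _ h.lt, fun Z h1 h2 => ?_⟩
    have : W < dag Z := by
      have := hlt _ _ h2
      rwa [hinv] at this
    have : dag Z < U := by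
      have := hlt _ _ h1
      rwa [hinv] at this
    exact h.2 ‹W < dag Z› ‹dag Z < U›
  -- dag ⊤ = ⊥
  have htop : dag ⊤ = ⊥ := by
    rw [eq_bot_iff, ← hinv ⊥]
    exact hanti _ _ le_top
  -- dim dag W = n - dim W
  have key : ∀ d : ℕ, ∀ W : Submodule K V, finrank K V - finrank K W = d →
      finrank K (dag W) + finrank K W = finrank K V := by
    intro d
    induction d with
    | zero =>
      intro W hW
      have hle := W.finrank_le
      have hWt : W = ⊤ := Submodule.eq_top_of_finrank_eq (by omega)
      rw [hWt, htop, finrank_bot, finrank_top]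
      simp
    | succ d ih =>
      intro W hW
      have hlt' : finrank K W < finrank K V := by omega
      have hWt : W ≠ ⊤ := fun he => by rw [he, finrank_top] at hlt'; omega
      obtain ⟨x, hx⟩ : ∃ x, x ∉ W := by
        by_contra hc
        push_neg at hc
        exact hWt (Submodule.eq_top_iff'.2 hc)
      set U := (K ∙ x) ⊔ W with hUdef
      have hcWU : W ⋖ U := Submodule.covBy_span_singleton_sup hx
      have hrU : finrank K U = finrank K W + 1 := covBy_finrank' hcWU
      have hUle := U.finrank_le
      have hIH := ih U (by omega)
      have hcd : dag U ⋖ dag W := hcov _ _ hcWU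
      have hrd : finrank K (dag W) = finrank K (dag U) + 1 := covBy_finrank' hcd
      omega
  have hdim : ∀ W : Submodule K V, finrank K (dag W) + finrank K W = finrank K V :=
    fun W => key _ W rfl
  -- dag (α ⊔ β) = dag α ⊓ dag β
  have hsup : ∀ a b : Submodule K V, dag (a ⊔ b) = dag a ⊓ dag b := by
    intro a b
    apply le_antisymm
    · exact le_inf (hanti _ _ le_sup_left) (hanti _ _ le_sup_right)
    · rw [← hinv (dag a ⊓ dag b)]
      apply hanti
      apply sup_le
      · have := hanti _ _ (inf_le_left : dag a ⊓ dag b ≤ dag a)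
        rwa [hinv] at this
      · have := hanti _ _ (inf_le_right : dag a ⊓ dag b ≤ dag b)
        rwa [hinv] at this
  have h1 : dag β ⊓ dag α = dag (β ⊔ α) := (hsup β α).symm
  have h2 : dag α ⊓ dag β = dag (α ⊔ β) := (hsup α β).symm
  have e1 := hdim β
  have e2 := hdim α
  have e3 : finrank K (dag β ⊓ dag α : Submodule K V) + finrank K (α ⊔ β : Submodule K V)
      = finrank K V := by rw [h1, sup_comm]; exact hdim (α ⊔ β)
  have e4 : finrank K (dag α ⊓ dag β : Submodule K V) + finrank K (α ⊔ β : Submodule K V)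
      = finrank K V := by rw [h2]; exact hdim (α ⊔ β)
  have e5 := Submodule.finrank_sup_add_finrank_inf_eq α β
  exact ⟨by omega, by omega⟩
end

section
/- Let V be a vector space of finite dimension n over a field K and let † be an order-reversing involution on the lattice of subspaces of V. Suppose ξ and η are subspaces with ξ ⊆ η† and η ⊆ ξ†. Then for every subspace α of V: ρ(α ∩ η†, ξ) + ρ(α† ∩ ξ†, η) = n − dim ξ − dim η, where ρ(λ, μ) = dim λ − dim(λ ∩ μ). In particular (taking η = ξ, so ξ ⊆ ξ†): ρ(α ∩ ξ†, ξ) + ρ(α† ∩ ξ†, ξ) = dim ξ† − dim ξ = n − 2 dim ξ. -/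
open Module

/-- `ρ(λ, μ) = dim λ − dim(λ ∩ μ)`. -/
noncomputable def rhoSub {K V : Type*} [Field K] [AddCommGroup V] [Module K V]
    (lam mu : Submodule K V) : ℤ :=
  (finrank K lam : ℤ) - finrank K (lam ⊓ mu : Submodule K V)

section Aux

open Submodule

variable {K V : Type*} [Field K] [AddCommGroup V] [Module K V] [FiniteDimensional K V]

private lemma aux_exists_sub (W : Submodule K V) (k : ℕ) (hk : k ≤ finrank K W) :
    ∃ W' : Submodule K V, W' ≤ W ∧ finrank K W' = k := by
  classical
  let b := finBasis K W
  have li0 : LinearIndependent K (fun i => (b i : V)) :=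
    b.linearIndependent.map' W.subtype (ker_subtype W)
  have li : LinearIndependent K (fun i : Fin k => (b (Fin.castLE hk i) : V)) :=
    li0.comp (Fin.castLE hk) (Fin.castLE_injective hk)
  refine ⟨span K (Set.range fun i : Fin k => (b (Fin.castLE hk i) : V)), ?_, ?_⟩
  · rw [span_le]; rintro _ ⟨i, rfl⟩; exact (b (Fin.castLE hk i)).2
  · rw [finrank_span_eq_card li, Fintype.card_fin]

private lemma aux_exists_super (W : Submodule K V) (hW : W ≠ ⊤) :
    ∃ W' : Submodule K V, W < W' ∧ finrank K W' = finrank K W + 1 := by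
  obtain ⟨x, hx⟩ := SetLike.exists_of_lt (lt_top_iff_ne_top.mpr hW : W < ⊤)
  obtain ⟨hx1, hx2⟩ := hx
  refine ⟨W ⊔ span K {x}, ?_, ?_⟩
  · refine lt_of_le_of_ne le_sup_left fun h => hx2 ?_
    rw [h]; exact le_sup_right (b := span K {x}) (mem_span_singleton_self x)
  · have hinf : W ⊓ span K {x} = ⊥ := by
      rw [eq_bot_iff]
      rintro y ⟨hy1, hy2⟩
      obtain ⟨c, rfl⟩ := mem_span_singleton.mp hy2
      rcases eq_or_ne c 0 with rfl | hc
      · simp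
      · exact absurd ((smul_mem_iff W hc).mp hy1) hx2
    have hx0 : x ≠ 0 := fun h => hx2 (h ▸ W.zero_mem)
    have := Submodule.finrank_sup_add_finrank_inf_eq W (span K {x})
    rw [hinf, finrank_bot, finrank_span_singleton hx0] at this
    omega

variable (dag : Submodule K V → Submodule K V)
    (hinv : ∀ W : Submodule K V, dag (dag W) = W)
    (hanti : ∀ W U : Submodule K V, W ≤ U → dag U ≤ dag W)

include hinv hanti

omit [FiniteDimensional K V] in
private lemma aux_dag_strict {W U : Submodule K V} (h : W < U) : dag U < dag W := by
  refine lt_of_le_of_ne (hanti _ _ h.le) fun he => h.ne ?_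
  have := congrArg dag he
  rw [hinv, hinv] at this
  exact this.symm

private lemma aux_dag_le : ∀ k : ℕ, ∀ W : Submodule K V, finrank K W = k →
    finrank K (dag W) + k ≤ finrank K V := by
  intro k
  induction k with
  | zero => intro W _; simpa using (dag W).finrank_le
  | succ k ih =>
      intro W hW
      obtain ⟨W', hle, hrk⟩ := aux_exists_sub W k (by omega)
      have hlt : W' < W := lt_of_le_of_ne hle (by rintro rfl; omega)
      have h2 := Submodule.finrank_lt_finrank_of_lt (aux_dag_strict dag hinv hanti hlt)
      have := ih W' hrk
      omega

private lemma aux_dag_ge : ∀ k : ℕ, ∀ W : Submodule K V, finrank K W + k = finrank K V →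
    k ≤ finrank K (dag W) := by
  intro k
  induction k with
  | zero => intro W _; omega
  | succ k ih =>
      intro W hW
      have hWne : W ≠ ⊤ := by
        rintro rfl
        rw [finrank_top] at hW; omega
      obtain ⟨W', hlt, hrk⟩ := aux_exists_super W hWne
      have h2 := Submodule.finrank_lt_finrank_of_lt (aux_dag_strict dag hinv hanti hlt)
      have := ih W' (by omega)
      omega

private lemma aux_dag_dim (W : Submodule K V) :
    finrank K (dag W) + finrank K W = finrank K V := by
  have h1 := aux_dag_le dag hinv hanti (finrank K W) W rfl
  have h2 := aux_dag_ge dag hinv hanti (finrank K V - finrank K W) W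
    (by have := W.finrank_le; omega)
  have := W.finrank_le
  omega

omit [FiniteDimensional K V] in
private lemma aux_dag_inf (W U : Submodule K V) : dag (W ⊓ U) = dag W ⊔ dag U := by
  refine le_antisymm ?_ (sup_le (hanti _ _ inf_le_left) (hanti _ _ inf_le_right))
  have : dag (dag W ⊔ dag U) ≤ W ⊓ U := by
    refine le_inf ?_ ?_
    · have := hanti _ _ (le_sup_left : dag W ≤ dag W ⊔ dag U); rwa [hinv] at this
    · have := hanti _ _ (le_sup_right : dag U ≤ dag W ⊔ dag U); rwa [hinv] at this
  have := hanti _ _ this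
  rwa [hinv] at this

omit [FiniteDimensional K V] in
private lemma aux_dag_sup (W U : Submodule K V) : dag (W ⊔ U) = dag W ⊓ dag U := by
  have := aux_dag_inf dag hinv hanti (dag W) (dag U)
  rw [hinv, hinv] at this
  rw [← this, hinv]

end Aux

/-- For an order-reversing involution `†` on the lattice of subspaces of
an `n`-dimensional vector space `V`, if `ξ ⊆ η†` and `η ⊆ ξ†`, then for every subspace `α`:
`ρ(α ∩ η†, ξ) + ρ(α† ∩ ξ†, η) = n − dim ξ − dim η`; in particular, for `η = ξ` (so `ξ ⊆ ξ†`):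
`ρ(α ∩ ξ†, ξ) + ρ(α† ∩ ξ†, ξ) = dim ξ† − dim ξ = n − 2 dim ξ`. -/
theorem rho_add_rho_eq {K V : Type*} [Field K] [AddCommGroup V] [Module K V]
    [FiniteDimensional K V]
    (dag : Submodule K V → Submodule K V)
    (hinv : ∀ W : Submodule K V, dag (dag W) = W)
    (hanti : ∀ W U : Submodule K V, W ≤ U → dag U ≤ dag W) :
    (∀ ξ η α : Submodule K V, ξ ≤ dag η → η ≤ dag ξ →
        rhoSub (α ⊓ dag η) ξ + rhoSub (dag α ⊓ dag ξ) η
          = (finrank K V : ℤ) - finrank K ξ - finrank K η) ∧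
      ∀ ξ α : Submodule K V, ξ ≤ dag ξ →
        rhoSub (α ⊓ dag ξ) ξ + rhoSub (dag α ⊓ dag ξ) ξ
            = (finrank K (dag ξ) : ℤ) - finrank K ξ ∧
          (finrank K (dag ξ) : ℤ) - finrank K ξ = (finrank K V : ℤ) - 2 * finrank K ξ := by
  have main : ∀ ξ η α : Submodule K V, ξ ≤ dag η → η ≤ dag ξ →
      rhoSub (α ⊓ dag η) ξ + rhoSub (dag α ⊓ dag ξ) η
        = (finrank K V : ℤ) - finrank K ξ - finrank K η := by
    intro ξ η α hξ hη
    -- simplify the inner intersections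
    have e1 : (α ⊓ dag η) ⊓ ξ = α ⊓ ξ := by
      rw [inf_assoc, inf_eq_right.mpr hξ]
    have e2 : (dag α ⊓ dag ξ) ⊓ η = dag α ⊓ η := by
      rw [inf_assoc, inf_comm (dag ξ) η, inf_eq_left.mpr hη]
    -- rank of sup
    have h1 := Submodule.finrank_sup_add_finrank_inf_eq (α ⊓ dag η) ξ
    rw [e1] at h1
    -- dag of lam ⊔ ξ
    have e3 : dag ((α ⊓ dag η) ⊔ ξ) = (dag α ⊔ η) ⊓ dag ξ := by
      rw [aux_dag_sup dag hinv hanti, aux_dag_inf dag hinv hanti, hinv]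
    have h2 := aux_dag_dim dag hinv hanti ((α ⊓ dag η) ⊔ ξ)
    rw [e3] at h2
    -- modular law: (dag α ⊔ η) ⊓ dag ξ = (dag α ⊓ dag ξ) ⊔ η
    have e4 : (dag α ⊔ η) ⊓ dag ξ = (dag α ⊓ dag ξ) ⊔ η := by
      rw [sup_comm, sup_inf_assoc_of_le (dag α) hη, sup_comm]
    rw [e4] at h2
    have h3 := Submodule.finrank_sup_add_finrank_inf_eq (dag α ⊓ dag ξ) η
    rw [e2] at h3
    unfold rhoSub
    rw [e1, e2]
    omega
  refine ⟨main, fun ξ α hξ => ?_⟩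
  have h1 := main ξ ξ α hξ hξ
  have h2 := aux_dag_dim dag hinv hanti ξ
  constructor
  · rw [h1]; omega
  · omega
end

section
/- Let V be a vector space of finite dimension n over a field K equipped with a nondegenerate symmetric bilinear form ⟨·,·⟩, and let ξ, η, α be subspaces with ξ ⊥ η (i.e. ξ ⊆ η^⊥). Then [dim((η^⊥ ∩ α) + ξ) − dim ξ] + [dim((ξ^⊥ ∩ α^⊥) + η) − dim η] = n − dim η − dim ξ. -/
/-!
With `U := (η^⊥ ⊓ α) ⊔ ξ`, dualising gives `U^⊥ = (η ⊔ α^⊥) ⊓ ξ^⊥`, and since `η ≤ ξ^⊥` the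
modular law turns this into `(ξ^⊥ ⊓ α^⊥) ⊔ η`. The identity is then `dim U + dim U^⊥ = n`.
-/

open Module
open LinearMap (BilinForm)

namespace LinearMap.BilinForm

theorem orthogonal_sup {R M : Type*} [CommSemiring R] [AddCommMonoid M] [Module R M]
    (B : BilinForm R M) (U W : Submodule R M) :
    B.orthogonal (U ⊔ W) = B.orthogonal U ⊓ B.orthogonal W := by
  ext x
  simp only [Submodule.mem_inf, mem_orthogonal_iff]
  constructor
  · intro hx
    exact ⟨fun u hu => hx u (Submodule.mem_sup_left hu),
      fun w hw => hx w (Submodule.mem_sup_right hw)⟩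
  · rintro ⟨hU, hW⟩ v hv
    obtain ⟨u, hu, w, hw, rfl⟩ := Submodule.mem_sup.1 hv
    rw [map_add, LinearMap.add_apply, hU u hu, hW w hw, add_zero]

section Nondegenerate

variable {K V : Type*} [Field K] [AddCommGroup V] [Module K V] [FiniteDimensional K V]
  {B : BilinForm K V}

theorem orthogonal_inf (hB : B.Nondegenerate) (hB₀ : B.IsRefl) (U W : Submodule K V) :
    B.orthogonal (U ⊓ W) = B.orthogonal U ⊔ B.orthogonal W := by
  conv_lhs => rw [← orthogonal_orthogonal hB hB₀ U, ← orthogonal_orthogonal hB hB₀ W,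
    ← orthogonal_sup]
  exact orthogonal_orthogonal hB hB₀ _

theorem orthogonal_orthogonal_inf_sup_of_le (hB : B.Nondegenerate) (hB₀ : B.IsRefl)
    {ξ η : Submodule K V} (α : Submodule K V) (h : ξ ≤ B.orthogonal η) :
    B.orthogonal ((B.orthogonal η ⊓ α) ⊔ ξ) = (B.orthogonal ξ ⊓ B.orthogonal α) ⊔ η := by
  have hηξ : η ≤ B.orthogonal ξ := (le_orthogonal_orthogonal hB₀).trans (orthogonal_le h)
  rw [orthogonal_sup, orthogonal_inf hB hB₀, orthogonal_orthogonal hB hB₀,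
    sup_inf_assoc_of_le _ hηξ, sup_comm, inf_comm]

theorem finrank_add_finrank_orthogonal_of_nondegenerate (hB : B.Nondegenerate)
    (W : Submodule K V) : finrank K W + finrank K (B.orthogonal W) = finrank K V := by
  have h := finrank_add_finrank_orthogonal' (B := B) W
  rwa [hB.ker_eq_bot, inf_bot_eq, finrank_bot, add_zero] at h

end Nondegenerate

end LinearMap.BilinForm

open LinearMap.BilinForm in
/-- In an `n`-dimensional nondegenerate orthogonal space `(V, ⟨·,·⟩)` with
subspaces `ξ ⊥ η` and any subspace `α`:
`[dim((η^⊥ ∩ α) + ξ) − dim ξ] + [dim((ξ^⊥ ∩ α^⊥) + η) − dim η] = n − dim η − dim ξ`. -/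
theorem cleaning_identity_orthogonal_space {K V : Type*} [Field K] [AddCommGroup V]
    [Module K V] [FiniteDimensional K V]
    (B : LinearMap.BilinForm K V) (hB : B.Nondegenerate)
    (hsymm : ∀ x y : V, B x y = B y x)
    (ξ η α : Submodule K V) (h : ξ ≤ B.orthogonal η) :
    ((finrank K ((B.orthogonal η ⊓ α) ⊔ ξ : Submodule K V) : ℤ) - finrank K ξ)
        + ((finrank K ((B.orthogonal ξ ⊓ B.orthogonal α) ⊔ η : Submodule K V) : ℤ)
            - finrank K η)
      = (finrank K V : ℤ) - finrank K η - finrank K ξ := by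
  have hB₀ : B.IsRefl := (isSymm_def.2 hsymm).isRefl
  have hdim := finrank_add_finrank_orthogonal_of_nondegenerate hB ((B.orthogonal η ⊓ α) ⊔ ξ)
  rw [orthogonal_orthogonal_inf_sup_of_le hB hB₀ α h] at hdim
  omega
end

section
/- Let V be a finite-dimensional vector space over a field equipped with a nondegenerate alternating bilinear form, and let ξ be an isotropic subspace (ξ ⊆ ξ^⊥). Suppose α, β, γ are subspaces of V such that β ⊆ γ^⊥, α = (β + γ)^⊥, ξ^⊥ ∩ α ⊆ ξ, and ξ^⊥ ∩ β ⊆ ξ. Then dim ξ^⊥ − dim ξ ≤ dim γ. -/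
open Module

lemma orth_sup_le_aux {K V : Type*} [Field K] [AddCommGroup V] [Module K V]
    (B : LinearMap.BilinForm K V) (X Y : Submodule K V) :
    B.orthogonal X ⊓ B.orthogonal Y ≤ B.orthogonal (X ⊔ Y) := by
  rintro v ⟨hx, hy⟩ n hn
  obtain ⟨x, hxm, y, hym, rfl⟩ := Submodule.mem_sup.mp hn
  have h1 := hx x hxm
  have h2 := hy y hym
  simp only [LinearMap.BilinForm.IsOrtho, map_add] at *
  simp [h1, h2]

/-- In a symplectic space `V` with an isotropic subspace `ξ`, if
`β ⊆ γ^⊥`, `α = (β + γ)^⊥`, `ξ^⊥ ∩ α ⊆ ξ` and `ξ^⊥ ∩ β ⊆ ξ`, then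
`dim ξ^⊥ − dim ξ ≤ dim γ`. -/
theorem code_dimension_bound {K V : Type*} [Field K] [AddCommGroup V] [Module K V]
    [FiniteDimensional K V]
    (B : LinearMap.BilinForm K V) (hB : B.Nondegenerate) (halt : B.IsAlt)
    (ξ α β γ : Submodule K V) (hξ : ξ ≤ B.orthogonal ξ)
    (hβγ : β ≤ B.orthogonal γ) (hα : α = B.orthogonal (β ⊔ γ))
    (hcorrα : B.orthogonal ξ ⊓ α ≤ ξ) (hcorrβ : B.orthogonal ξ ⊓ β ≤ ξ) :
    (finrank K (B.orthogonal ξ) : ℤ) - finrank K ξ ≤ finrank K γ := by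
  have hrefl := halt.isRefl
  -- Step 1: B.orthogonal (ξ ⊔ (β ⊔ γ)) ≤ ξ
  have h1 : B.orthogonal (ξ ⊔ (β ⊔ γ)) ≤ ξ := by
    refine le_trans ?_ hcorrα
    rw [hα]
    refine le_inf ?_ ?_
    · exact LinearMap.BilinForm.orthogonal_le le_sup_left
    · exact LinearMap.BilinForm.orthogonal_le le_sup_right
  -- Step 2: ξ^⊥ ≤ ξ ⊔ (β ⊔ γ)
  have h2 : B.orthogonal ξ ≤ ξ ⊔ (β ⊔ γ) := by
    calc B.orthogonal ξ ≤ B.orthogonal (B.orthogonal (ξ ⊔ (β ⊔ γ))) :=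
          LinearMap.BilinForm.orthogonal_le h1
      _ = ξ ⊔ (β ⊔ γ) := B.orthogonal_orthogonal hB hrefl _
  set W := B.orthogonal ξ ⊓ (β ⊔ γ) with hW
  have h3 : B.orthogonal ξ = ξ ⊔ W := by
    rw [hW, inf_comm, ← sup_inf_assoc_of_le _ hξ, inf_eq_right.mpr h2]
  have h4 : W ⊓ β ≤ ξ ⊓ W := by
    refine le_inf ?_ inf_le_left
    refine le_trans ?_ hcorrβ
    exact le_inf (le_trans inf_le_left inf_le_left) inf_le_right
  have e1 : finrank K ↥(ξ ⊔ W) + finrank K ↥(ξ ⊓ W) = finrank K ξ + finrank K W :=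
    Submodule.finrank_sup_add_finrank_inf_eq ξ W
  have e2 : finrank K ↥(W ⊔ β) + finrank K ↥(W ⊓ β) = finrank K W + finrank K β :=
    Submodule.finrank_sup_add_finrank_inf_eq W β
  have e3 : finrank K ↥(W ⊔ β) ≤ finrank K ↥(β ⊔ γ) :=
    Submodule.finrank_mono (sup_le inf_le_right le_sup_left)
  have e4 : finrank K ↥(β ⊔ γ) + finrank K ↥(β ⊓ γ) = finrank K β + finrank K γ :=
    Submodule.finrank_sup_add_finrank_inf_eq β γ
  have e5 : finrank K ↥(W ⊓ β) ≤ finrank K ↥(ξ ⊓ W) := Submodule.finrank_mono h4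
  have e6 : finrank K ↥(B.orthogonal ξ) = finrank K ↥(ξ ⊔ W) := by rw [h3]
  omega
end

section
/- Let G be a finite commutative group and let ⟨·,·⟩ : G × G → ℂ* be a nondegenerate involutive bicharacter, i.e. the map g ↦ ⟨g,·⟩ is a group isomorphism from G onto the group Hom(G, ℂ*) of characters of G, and ⟨g,g'⟩ = 1 if and only if ⟨g',g⟩ = 1. For a subgroup K of G let K† = {g ∈ G | ⟨h,g⟩ = 1 for all h ∈ K} (a subgroup of G). Let H be a subgroup with H ⊆ H† and let B be any subgroup of G. Then |(H† ∩ B)/(H ∩ B)| · |(H† ∩ B†)/(H ∩ B†)| = |H†/H|, where |·| denotes the cardinality of the quotient group. -/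
/-!
Through `Φ` and the symmetry of `⟨·,·⟩`, `K†` is the group of characters of `G` trivial on `K`,
i.e. of characters of `G ⧸ K`; hence `|K†| · |K| = |G|`, and so `K†† = K`. Together with
`(K ⊔ L)† = K† ⊓ L†` and `|K ⊔ L| · |K ⊓ L| = |K| · |L|` this gives
`|K† ⊓ L| · |G| = |K†| · |L| · |K ⊓ L†|`. Applied to `(H, B)` and to `(H†, B)` it expresses
`|H† ⊓ B|` and `|H ⊓ B|` through `|H ⊓ B†|` and `|H† ⊓ B†|`, and the identity follows.
-/

/-- For a bicharacter `χ` on a commutative group `G` and a subgroup `K`, the subgroup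
`K† = {g ∈ G | ⟨h,g⟩ = 1 for all h ∈ K}`. -/
def bidual {G : Type*} [CommGroup G] (χ : G → (G →* ℂˣ)) (K : Subgroup G) : Subgroup G where
  carrier := {g | ∀ h ∈ K, χ h g = 1}
  one_mem' := fun h _ => map_one (χ h)
  mul_mem' := fun {a b} ha hb h hK => by rw [map_mul, ha h hK, hb h hK, one_mul]
  inv_mem' := fun {a} ha h hK => by rw [map_inv, ha h hK, inv_one]

namespace Subgroup

variable {G : Type*} [Group G]

theorem card_mul_relIndex {K L : Subgroup G} (h : K ≤ L) :
    Nat.card K * K.relIndex L = Nat.card L := by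
  simpa only [relIndex_bot_left] using relIndex_mul_relIndex ⊥ K L bot_le h

theorem card_sup_mul_card_inf (K L : Subgroup G) [L.Normal] :
    Nat.card (K ⊔ L : Subgroup G) * Nat.card (K ⊓ L : Subgroup G) = Nat.card K * Nat.card L := by
  rw [← card_mul_relIndex (le_sup_right : L ≤ K ⊔ L), relIndex_sup_right,
    ← card_mul_relIndex (inf_le_left : K ⊓ L ≤ K), inf_comm, ← inf_relIndex_right L K]
  ring

end Subgroup

section Bidual

variable {G : Type*} [CommGroup G]

theorem mem_bidual {χ : G → (G →* ℂˣ)} {K : Subgroup G} {g : G} :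
    g ∈ bidual χ K ↔ ∀ h ∈ K, χ h g = 1 := Iff.rfl

theorem bidual_sup {F : Type*} [FunLike F G (G →* ℂˣ)] [MonoidHomClass F G (G →* ℂˣ)] (χ : F)
    (K L : Subgroup G) : bidual χ (K ⊔ L) = bidual χ K ⊓ bidual χ L := by
  refine le_antisymm (le_inf (fun g hg h hh => hg h (Subgroup.mem_sup_left hh))
    (fun g hg h hh => hg h (Subgroup.mem_sup_right hh))) ?_
  rintro g ⟨hgK, hgL⟩ h hh
  obtain ⟨y, hy, z, hz, rfl⟩ := Subgroup.mem_sup.mp hh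
  rw [map_mul, MonoidHom.mul_apply, hgK y hy, hgL z hz, one_mul]

theorem le_bidual_bidual {χ : G → (G →* ℂˣ)} (hχ : ∀ g g', χ g g' = 1 → χ g' g = 1)
    (K : Subgroup G) : K ≤ bidual χ (bidual χ K) :=
  fun k hk h hh => hχ k h (hh k hk)

variable (Φ : G ≃* (G →* ℂˣ))

theorem bidual_eq_comap_ker_domRestrictHom (hΦ : ∀ g g', Φ g g' = 1 ↔ Φ g' g = 1)
    (K : Subgroup G) :
    bidual Φ K = (MonoidHom.domRestrictHom K ℂˣ).ker.comap (Φ : G →* (G →* ℂˣ)) := by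
  ext g
  simp [mem_bidual, MonoidHom.domRestrict_eq_one_iff, hΦ]

variable [Finite G]

theorem card_bidual (hΦ : ∀ g g', Φ g g' = 1 ↔ Φ g' g = 1) (K : Subgroup G) :
    Nat.card (bidual Φ K) = Nat.card (G ⧸ K) := by
  have : NeZero (Monoid.exponent G : ℂ) :=
    ⟨Nat.cast_ne_zero.mpr Monoid.exponent_ne_zero_of_finite⟩
  rw [bidual_eq_comap_ker_domRestrictHom Φ hΦ, ← CommGroup.card_domRestrictHom_ker ℂ K]
  exact Nat.card_congr (Φ.toEquiv.subtypeEquiv fun _ => Iff.rfl)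

theorem card_bidual_mul_card (hΦ : ∀ g g', Φ g g' = 1 ↔ Φ g' g = 1) (K : Subgroup G) :
    Nat.card (bidual Φ K) * Nat.card K = Nat.card G := by
  rw [card_bidual Φ hΦ, ← Subgroup.card_eq_card_quotient_mul_card_subgroup]

theorem bidual_bidual (hΦ : ∀ g g', Φ g g' = 1 ↔ Φ g' g = 1) (K : Subgroup G) :
    bidual Φ (bidual Φ K) = K := by
  have hcard : Nat.card (bidual Φ (bidual Φ K)) * Nat.card (bidual Φ K) =
      Nat.card K * Nat.card (bidual Φ K) := by
    rw [card_bidual_mul_card Φ hΦ, mul_comm, card_bidual_mul_card Φ hΦ]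
  exact (Subgroup.eq_of_le_of_card_ge (le_bidual_bidual (fun g g' => (hΦ g g').mp) K)
    (Nat.eq_of_mul_eq_mul_right Nat.card_pos hcard).le).symm

theorem card_bidual_inf_mul_card (hΦ : ∀ g g', Φ g g' = 1 ↔ Φ g' g = 1) (K L : Subgroup G) :
    Nat.card (bidual Φ K ⊓ L : Subgroup G) * Nat.card G =
      Nat.card (bidual Φ K) * Nat.card L * Nat.card (K ⊓ bidual Φ L : Subgroup G) := by
  have hsup := card_bidual_mul_card Φ hΦ (bidual Φ K ⊔ L)
  rw [bidual_sup, bidual_bidual Φ hΦ] at hsup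
  rw [← hsup, ← Subgroup.card_sup_mul_card_inf (bidual Φ K) L]
  ring

end Bidual

/-- "Cleaning" identity in a finite commutative group.
Let `⟨·,·⟩` be a nondegenerate involutive bicharacter on a finite commutative group `G`
(`g ↦ ⟨g,·⟩` is an isomorphism onto the character group, and `⟨g,g'⟩ = 1 ↔ ⟨g',g⟩ = 1`).
If `H ⊆ H†`, then for any subgroup `B`:
`|(H† ∩ B)/(H ∩ B)| · |(H† ∩ B†)/(H ∩ B†)| = |H†/H|`. -/
theorem cleaning_identity_abelian_group {G : Type*} [CommGroup G] [Fintype G]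
    (Φ : G ≃* (G →* ℂˣ))
    (hinvol : ∀ g g' : G, Φ g g' = 1 ↔ Φ g' g = 1)
    (H : Subgroup G) (hH : H ≤ bidual (fun g => Φ g) H)
    (B : Subgroup G) :
    (H ⊓ B).relIndex (bidual (fun g => Φ g) H ⊓ B)
        * (H ⊓ bidual (fun g => Φ g) B).relIndex
            (bidual (fun g => Φ g) H ⊓ bidual (fun g => Φ g) B)
      = H.relIndex (bidual (fun g => Φ g) H) := by
  have hHB := Subgroup.card_mul_relIndex (inf_le_inf_right B hH)
  have hHB' := Subgroup.card_mul_relIndex (inf_le_inf_right (bidual Φ B) hH)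
  have hHH := Subgroup.card_mul_relIndex hH
  have hdual := card_bidual_inf_mul_card Φ hinvol H B
  have hdual' := card_bidual_inf_mul_card Φ hinvol (bidual Φ H) B
  rw [bidual_bidual Φ hinvol] at hdual'
  have hpos : 0 < Nat.card H * Nat.card B * Nat.card (H ⊓ bidual Φ B : Subgroup G) :=
    Nat.mul_pos (Nat.mul_pos Nat.card_pos Nat.card_pos) Nat.card_pos
  refine Nat.eq_of_mul_eq_mul_left hpos ?_
  calc _ = (H ⊓ B).relIndex (bidual Φ H ⊓ B) * (Nat.card H * Nat.card B *
          (Nat.card (H ⊓ bidual Φ B : Subgroup G) *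
            (H ⊓ bidual Φ B).relIndex (bidual Φ H ⊓ bidual Φ B))) := by ring
    _ = Nat.card (H ⊓ B : Subgroup G) * (H ⊓ B).relIndex (bidual Φ H ⊓ B) * Nat.card G := by
      rw [hHB', ← hdual']; ring
    _ = Nat.card H * H.relIndex (bidual Φ H) * Nat.card B *
          Nat.card (H ⊓ bidual Φ B : Subgroup G) := by
      rw [hHB, hdual, hHH]
    _ = _ := by ring
end
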